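/- Let (i_1,…,i_m) be a word in {1,…,n−1} which is not reduced, i.e. ℓ(s_{i_1}s_{i_2}⋯s_{i_m}) < m. Then the composite operator ∂_{i_1}∘∂_{i_2}∘⋯∘∂_{i_m} on ℤ[ε_1,…,ε_n] is the zero operator. In particular ∂_i∘∂_i = 0 for every i. -/

import Mathlib

/-!
The divided differences satisfy the nil-Coxeter relations: `∂ᵢ∂ᵢ = 0`, `∂ᵢ∂ⱼ = ∂ⱼ∂ᵢ` for
`|i - j| > 1`, and `∂ᵢ∂ᵢ₊₁∂ᵢ = ∂ᵢ₊₁∂ᵢ∂ᵢ₊₁`. After multiplying by the product of the roots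
involved, each side of the last two becomes an alternating sum of permuted copies of the
argument, and the two sums agree because the permutations satisfy the same relations.

For any operators with these relations, the composite along a reduced word of `w` depends only
on `w` (induction on `ℓ(w)`): two reduced words beginning with different letters `i < j` show
that `sᵢ` and `sⱼ` are both left descents of `w`, so `w` also has a reduced word beginning with
`sⱼsᵢ` (if `j > i + 1`) or with `sᵢ₊₁sᵢsᵢ₊₁` (if `j = i + 1`), and the commutation or braid
relation connects the two. If `i :: t` is not reduced but `t` is, then `sᵢ` is a left descent
of the product of `t`, so `t` may be replaced by a reduced word `i :: r`, and `∂ᵢ∂ᵢ = 0`.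
-/

open MvPolynomial

/-- The adjacent transposition swapping `i` and `i+1` (0-indexed). -/
def sT (n : ℕ) (i : ℕ) : Equiv.Perm (Fin n) :=
  if h : i + 1 < n then Equiv.swap ⟨i, Nat.lt_of_succ_lt h⟩ ⟨i + 1, h⟩ else 1

def wordProd (n : ℕ) (l : List ℕ) : Equiv.Perm (Fin n) := (l.map (sT n)).prod

/-- Number of inversions = Coxeter length. -/
def invLen {n : ℕ} (w : Equiv.Perm (Fin n)) : ℕ :=
  (Finset.univ.filter fun p : Fin n × Fin n => p.1 < p.2 ∧ w p.2 < w p.1).card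

open Classical in
/-- The divided difference operator. -/
noncomputable def dd (n : ℕ) (i : ℕ) (f : MvPolynomial (Fin n) ℤ) : MvPolynomial (Fin n) ℤ :=
  if h : i + 1 < n then
    if hd : ∃ g : MvPolynomial (Fin n) ℤ,
        f - rename (⇑(sT n i)) f = (X ⟨i, Nat.lt_of_succ_lt h⟩ - X ⟨i + 1, h⟩) * g
    then hd.choose else 0
  else 0

open Classical in
noncomputable def ddList (n : ℕ) : List ℕ → MvPolynomial (Fin n) ℤ → MvPolynomial (Fin n) ℤ
  | [], f => f
  | i :: t, f => dd n i (ddList n t f)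

def IsReducedWord (n : ℕ) (l : List ℕ) (w : Equiv.Perm (Fin n)) : Prop :=
  (∀ i ∈ l, i + 1 < n) ∧ wordProd n l = w ∧ l.length = invLen w

noncomputable def nest (n : ℕ) :
    List (List ℕ) → List (MvPolynomial (Fin n) ℤ) → MvPolynomial (Fin n) ℤ
  | [], _ => 1
  | _ :: _, [] => 1
  | l :: ls, g :: gs => ddList n l (g * nest n ls gs)

noncomputable def xv (n j : ℕ) : MvPolynomial (Fin n) ℤ := if h : j < n then X ⟨j, h⟩ else 0

section SimpleTransposition

variable {n i j : ℕ}

lemma sT_of_lt (hi : i + 1 < n) : sT n i = Equiv.swap ⟨i, by omega⟩ ⟨i + 1, hi⟩ := dif_pos hi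

lemma sT_of_not_lt (hi : ¬i + 1 < n) : sT n i = 1 := dif_neg hi

lemma sT_val (hi : i + 1 < n) (x : Fin n) :
    (sT n i x : ℕ) = if (x : ℕ) = i then i + 1 else if (x : ℕ) = i + 1 then i else x := by
  rw [sT_of_lt hi, Equiv.swap_apply_def]
  split_ifs <;> simp_all [Fin.ext_iff]

lemma sT_apply_left (hi : i + 1 < n) : sT n i ⟨i, by omega⟩ = ⟨i + 1, hi⟩ :=
  Fin.ext (by simp [sT_val hi])

lemma sT_apply_right (hi : i + 1 < n) : sT n i ⟨i + 1, hi⟩ = ⟨i, by omega⟩ :=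
  Fin.ext (by simp [sT_val hi])

lemma sT_apply_of_ne {k : ℕ} (hk : k < n) (h₁ : k ≠ i) (h₂ : k ≠ i + 1) :
    sT n i ⟨k, hk⟩ = ⟨k, hk⟩ := by
  by_cases hi : i + 1 < n
  · exact Fin.ext (by simp [sT_val hi, h₁, h₂])
  · rw [sT_of_not_lt hi, Equiv.Perm.one_apply]

lemma sT_mul_self : sT n i * sT n i = 1 := by
  unfold sT; split_ifs <;> simp

lemma sT_mul_sT_mul (w : Equiv.Perm (Fin n)) : sT n i * (sT n i * w) = w := by
  rw [← mul_assoc, sT_mul_self, one_mul]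

lemma sT_inv : (sT n i)⁻¹ = sT n i := inv_eq_of_mul_eq_one_right sT_mul_self

lemma sT_mul_inv_apply (w : Equiv.Perm (Fin n)) (x : Fin n) :
    (sT n i * w)⁻¹ x = w⁻¹ (sT n i x) := by
  rw [mul_inv_rev, sT_inv, Equiv.Perm.mul_apply]

lemma sT_mul_comm (hij : i + 1 < j) : sT n i * sT n j = sT n j * sT n i := by
  by_cases hj : j + 1 < n
  · refine Equiv.ext fun x => Fin.ext ?_
    simp only [Equiv.Perm.mul_apply, sT_val (show i + 1 < n by omega), sT_val hj]
    split_ifs <;> omega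
  · rw [sT_of_not_lt hj, one_mul, mul_one]

lemma sT_braid (h : i + 2 < n) :
    sT n i * sT n (i + 1) * sT n i = sT n (i + 1) * sT n i * sT n (i + 1) := by
  refine Equiv.ext fun x => Fin.ext ?_
  simp only [Equiv.Perm.mul_apply, sT_val (show i + 1 < n by omega),
    sT_val (show i + 1 + 1 < n by omega)]
  split_ifs <;> omega

end SimpleTransposition

section Inversions

variable {n i : ℕ} {w : Equiv.Perm (Fin n)}

lemma sT_lt_sT_iff (hi : i + 1 < n) {u v : Fin n}
    (h₁ : ¬(u = ⟨i, by omega⟩ ∧ v = ⟨i + 1, hi⟩)) (h₂ : ¬(u = ⟨i + 1, hi⟩ ∧ v = ⟨i, by omega⟩)) :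
    sT n i v < sT n i u ↔ v < u := by
  simp only [Fin.ext_iff] at h₁ h₂
  simp only [Fin.lt_def, sT_val hi]
  split_ifs <;> omega

lemma invLen_sT_mul_of_lt (hi : i + 1 < n) (h : w⁻¹ ⟨i, by omega⟩ < w⁻¹ ⟨i + 1, hi⟩) :
    invLen (sT n i * w) = invLen w + 1 := by
  have key : ∀ u v : Fin n, (w⁻¹ u < w⁻¹ v ∧ sT n i v < sT n i u) ↔
      (u = ⟨i, by omega⟩ ∧ v = ⟨i + 1, hi⟩) ∨ (w⁻¹ u < w⁻¹ v ∧ v < u) := by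
    intro u v
    by_cases h₁ : u = ⟨i, by omega⟩ ∧ v = ⟨i + 1, hi⟩
    · obtain ⟨rfl, rfl⟩ := h₁
      rw [sT_apply_left hi, sT_apply_right hi]
      exact iff_of_true ⟨h, Fin.mk_lt_mk.2 (by omega)⟩ (.inl ⟨rfl, rfl⟩)
    by_cases h₂ : u = ⟨i + 1, hi⟩ ∧ v = ⟨i, by omega⟩
    · obtain ⟨rfl, rfl⟩ := h₂
      refine iff_of_false (fun h' => h.not_gt h'.1) ?_
      rintro (⟨he, -⟩ | ⟨h', -⟩)
      exacts [absurd he (by simp), h.not_gt h']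
    rw [sT_lt_sT_iff hi h₁ h₂]
    simp [h₁]
  set z := (w⁻¹ ⟨i, by omega⟩, w⁻¹ ⟨i + 1, hi⟩)
  have hz : z ∉ Finset.univ.filter fun p : Fin n × Fin n => p.1 < p.2 ∧ w p.2 < w p.1 := by
    simp [z]
  suffices (Finset.univ.filter fun p : Fin n × Fin n =>
      p.1 < p.2 ∧ (sT n i * w) p.2 < (sT n i * w) p.1) = insert z
      (Finset.univ.filter fun p : Fin n × Fin n => p.1 < p.2 ∧ w p.2 < w p.1) by
    rw [invLen, invLen, this, Finset.card_insert_of_notMem hz]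
  ext ⟨p₁, p₂⟩
  obtain ⟨u, rfl⟩ := w⁻¹.surjective p₁
  obtain ⟨v, rfl⟩ := w⁻¹.surjective p₂
  rw [Finset.mem_insert, Finset.mem_filter, Finset.mem_filter]
  simpa [z] using key u v

lemma invLen_sT_mul_of_gt (hi : i + 1 < n) (h : w⁻¹ ⟨i + 1, hi⟩ < w⁻¹ ⟨i, by omega⟩) :
    invLen w = invLen (sT n i * w) + 1 := by
  have := invLen_sT_mul_of_lt hi (w := sT n i * w)
    (by rwa [sT_mul_inv_apply, sT_mul_inv_apply, sT_apply_left, sT_apply_right])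
  rwa [sT_mul_sT_mul] at this

lemma invLen_sT_mul_lt_iff (hi : i + 1 < n) :
    invLen (sT n i * w) < invLen w ↔ w⁻¹ ⟨i + 1, hi⟩ < w⁻¹ ⟨i, by omega⟩ := by
  refine ⟨fun h => ?_, fun h => by rw [invLen_sT_mul_of_gt hi h]; omega⟩
  refine (lt_or_gt_of_ne (w⁻¹.injective.ne ?_)).resolve_right fun h' => ?_
  · simp [Fin.ext_iff]
  · rw [invLen_sT_mul_of_lt hi h'] at h; omega

lemma invLen_sT_mul_eq_or (hi : i + 1 < n) :
    invLen (sT n i * w) = invLen w + 1 ∨ invLen w = invLen (sT n i * w) + 1 := by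
  by_cases h : invLen (sT n i * w) < invLen w
  · exact .inr (invLen_sT_mul_of_gt hi ((invLen_sT_mul_lt_iff hi).1 h))
  · refine .inl (invLen_sT_mul_of_lt hi ?_)
    rw [invLen_sT_mul_lt_iff hi, not_lt] at h
    exact h.lt_of_ne (w⁻¹.injective.ne (by simp [Fin.ext_iff]))

lemma invLen_one : invLen (1 : Equiv.Perm (Fin n)) = 0 := by
  rw [invLen, Finset.card_eq_zero, Finset.filter_eq_empty_iff]
  exact fun p _ h => lt_asymm h.1 h.2

lemma exists_invLen_sT_mul_lt (hw : w ≠ 1) : ∃ i, i + 1 < n ∧ invLen (sT n i * w) < invLen w := by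
  by_contra! h
  obtain _ | k := n
  · exact hw (Subsingleton.elim _ _)
  have hmono : StrictMono ⇑w⁻¹ := Fin.strictMono_iff_lt_succ.2 fun j => by
    have hj := h j (by omega)
    rw [← not_lt, invLen_sT_mul_lt_iff (by omega), not_lt] at hj
    exact hj.lt_of_ne (w⁻¹.injective.ne (Fin.castSucc_lt_succ (i := j)).ne)
  exact hw (inv_eq_one.1 (Equiv.ext fun x => congrFun hmono.eq_id x))

end Inversions

section ReducedWords

variable {n i j : ℕ} {w : Equiv.Perm (Fin n)}

lemma wordProd_cons (i : ℕ) (l : List ℕ) : wordProd n (i :: l) = sT n i * wordProd n l := rfl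

lemma invLen_sT_mul_add_one (hi : i + 1 < n) (h : invLen (sT n i * w) < invLen w) :
    invLen (sT n i * w) + 1 = invLen w := by
  rcases invLen_sT_mul_eq_or hi (w := w) with h' | h' <;> omega

lemma invLen_wordProd_le (l : List ℕ) : invLen (wordProd n l) ≤ l.length := by
  induction l with
  | nil => exact invLen_one.le
  | cons i l ih =>
    rw [wordProd_cons, List.length_cons]
    by_cases hi : i + 1 < n
    · rcases invLen_sT_mul_eq_or hi (w := wordProd n l) with h | h <;> omega
    · rw [sT_of_not_lt hi, one_mul]
      omega

lemma isReducedWord_of_length_le {l : List ℕ} (hl : ∀ i ∈ l, i + 1 < n)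
    (hw : wordProd n l = w) (hlen : l.length ≤ invLen w) : IsReducedWord n l w :=
  ⟨hl, hw, le_antisymm hlen (hw ▸ invLen_wordProd_le l)⟩

lemma IsReducedWord.head_lt {t : List ℕ} (h : IsReducedWord n (i :: t) w) : i + 1 < n :=
  h.1 i List.mem_cons_self

lemma IsReducedWord.wordProd_tail {t : List ℕ} (h : IsReducedWord n (i :: t) w) :
    wordProd n t = sT n i * w := by
  rw [← h.2.1, wordProd_cons, sT_mul_sT_mul]

lemma IsReducedWord.invLen_sT_mul_head {t : List ℕ} (h : IsReducedWord n (i :: t) w) :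
    invLen (sT n i * w) + 1 = invLen w := by
  have hle := invLen_wordProd_le (n := n) t
  have hlen := h.2.2
  rw [h.wordProd_tail] at hle
  rw [List.length_cons] at hlen
  exact invLen_sT_mul_add_one h.head_lt (by omega)

lemma IsReducedWord.tail {t : List ℕ} (h : IsReducedWord n (i :: t) w) :
    IsReducedWord n t (sT n i * w) := by
  refine ⟨fun j hj => h.1 j (List.mem_cons_of_mem i hj), h.wordProd_tail, ?_⟩
  have hlen := h.2.2
  rw [List.length_cons] at hlen
  have := h.invLen_sT_mul_head
  omega

lemma exists_isReducedWord (w : Equiv.Perm (Fin n)) : ∃ l, IsReducedWord n l w := by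
  induction h : invLen w using Nat.strong_induction_on generalizing w with
  | _ k ih =>
  by_cases hw : w = 1
  · subst hw
    exact ⟨[], by simp, rfl, invLen_one.symm⟩
  obtain ⟨i, hi, hlt⟩ := exists_invLen_sT_mul_lt hw
  obtain ⟨r, hr⟩ := ih _ (h ▸ hlt) _ rfl
  refine ⟨i :: r, isReducedWord_of_length_le (List.forall_mem_cons.2 ⟨hi, hr.1⟩)
    (by rw [wordProd_cons, hr.2.1, sT_mul_sT_mul]) ?_⟩
  rw [List.length_cons, hr.2.2, invLen_sT_mul_add_one hi hlt]

lemma invLen_sT_mul_sT_mul_add_two (hij : i + 1 < j) (hj : j + 1 < n)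
    (hdi : invLen (sT n i * w) < invLen w) (hdj : invLen (sT n j * w) < invLen w) :
    invLen (sT n j * (sT n i * w)) + 2 = invLen w := by
  have hi : i + 1 < n := by omega
  have hdj' : invLen (sT n j * (sT n i * w)) < invLen (sT n i * w) := by
    rw [invLen_sT_mul_lt_iff hj] at hdj ⊢
    simp only [sT_mul_inv_apply]
    rwa [sT_apply_of_ne _ (by omega) (by omega), sT_apply_of_ne _ (by omega) (by omega)]
  have := invLen_sT_mul_add_one hi hdi
  have := invLen_sT_mul_add_one hj hdj'
  omega

lemma invLen_sT_mul_sT_mul_sT_mul_add_three (h : i + 2 < n)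
    (hd : invLen (sT n i * w) < invLen w) (hd' : invLen (sT n (i + 1) * w) < invLen w) :
    invLen (sT n i * (sT n (i + 1) * (sT n i * w))) + 3 = invLen w := by
  have hi : i + 1 < n := by omega
  have hi' : i + 1 + 1 < n := by omega
  rw [invLen_sT_mul_lt_iff hi] at hd
  rw [invLen_sT_mul_lt_iff hi'] at hd'
  have h₁ : invLen (sT n (i + 1) * (sT n i * w)) < invLen (sT n i * w) := by
    simp only [invLen_sT_mul_lt_iff hi', sT_mul_inv_apply]
    rw [sT_apply_right hi, sT_apply_of_ne _ (by omega) (by omega)]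
    exact hd'.trans hd
  have h₂ : invLen (sT n i * (sT n (i + 1) * (sT n i * w))) <
      invLen (sT n (i + 1) * (sT n i * w)) := by
    simp only [invLen_sT_mul_lt_iff hi, sT_mul_inv_apply]
    rw [sT_apply_left hi',
      sT_apply_of_ne (i := i + 1) _ (by omega) (by omega), sT_apply_left hi,
      sT_apply_of_ne _ (by omega) (by omega)]
    exact hd'
  have := invLen_sT_mul_add_one hi (by rwa [invLen_sT_mul_lt_iff hi])
  have := invLen_sT_mul_add_one hi' h₁
  have := invLen_sT_mul_add_one hi h₂
  omega

end ReducedWords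

structure NilCoxeterRelations {α : Type*} [Zero α] (n : ℕ) (D : ℕ → α → α) : Prop where
  map_zero : ∀ i, i + 1 < n → D i 0 = 0
  sq_eq_zero : ∀ i, i + 1 < n → ∀ a, D i (D i a) = 0
  comm : ∀ i j, i + 1 < j → j + 1 < n → ∀ a, D i (D j a) = D j (D i a)
  braid : ∀ i, i + 2 < n → ∀ a, D i (D (i + 1) (D i a)) = D (i + 1) (D i (D (i + 1) a))

def ReducedWordsAgree {α : Type*} (n : ℕ) (D : ℕ → α → α) (a : α) (w : Equiv.Perm (Fin n)) :
    Prop :=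
  ∀ l l', IsReducedWord n l w → IsReducedWord n l' w → l.foldr D a = l'.foldr D a

namespace NilCoxeterRelations

variable {α : Type*} [Zero α] {n i j : ℕ} {D : ℕ → α → α} {w : Equiv.Perm (Fin n)}
  {t t' : List ℕ}

lemma foldr_cons_eq_of_far (hD : NilCoxeterRelations n D) (a : α)
    (IH : ∀ v : Equiv.Perm (Fin n), invLen v < invLen w → ReducedWordsAgree n D a v)
    (hl : IsReducedWord n (i :: t) w) (hl' : IsReducedWord n (j :: t') w) (hij : i + 1 < j) :
    (i :: t).foldr D a = (j :: t').foldr D a := by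
  have hi := hl.head_lt
  have hj := hl'.head_lt
  have hdi := hl.invLen_sT_mul_head
  have hdj := hl'.invLen_sT_mul_head
  have hv := invLen_sT_mul_sT_mul_add_two (w := w) hij hj (by omega) (by omega)
  obtain ⟨r, hr⟩ := exists_isReducedWord (sT n j * (sT n i * w))
  have h₁ : IsReducedWord n (j :: r) (sT n i * w) :=
    isReducedWord_of_length_le (List.forall_mem_cons.2 ⟨hj, hr.1⟩)
      (by rw [wordProd_cons, hr.2.1, sT_mul_sT_mul]) (by rw [List.length_cons, hr.2.2]; omega)
  have h₂ : IsReducedWord n (i :: r) (sT n j * w) :=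
    isReducedWord_of_length_le (List.forall_mem_cons.2 ⟨hi, hr.1⟩)
      (by rw [wordProd_cons, hr.2.1, ← mul_assoc, sT_mul_comm hij, mul_assoc, sT_mul_sT_mul])
      (by rw [List.length_cons, hr.2.2]; omega)
  calc (i :: t).foldr D a = D i ((j :: r).foldr D a) :=
        congrArg (D i) (IH _ (by omega) _ _ hl.tail h₁)
    _ = D j ((i :: r).foldr D a) := hD.comm i j hij hj _
    _ = (j :: t').foldr D a := congrArg (D j) (IH _ (by omega) _ _ h₂ hl'.tail)

lemma foldr_cons_eq_of_braid (hD : NilCoxeterRelations n D) (a : α)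
    (IH : ∀ v : Equiv.Perm (Fin n), invLen v < invLen w → ReducedWordsAgree n D a v)
    (hl : IsReducedWord n (i :: t) w) (hl' : IsReducedWord n ((i + 1) :: t') w) :
    (i :: t).foldr D a = ((i + 1) :: t').foldr D a := by
  have hi := hl.head_lt
  have hi' := hl'.head_lt
  have hdi := hl.invLen_sT_mul_head
  have hdi' := hl'.invLen_sT_mul_head
  have hv := invLen_sT_mul_sT_mul_sT_mul_add_three (w := w) (by omega) (by omega) (by omega)
  obtain ⟨r, hr⟩ := exists_isReducedWord (sT n i * (sT n (i + 1) * (sT n i * w)))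
  have h₁ : IsReducedWord n ((i + 1) :: i :: r) (sT n i * w) :=
    isReducedWord_of_length_le
      (List.forall_mem_cons.2 ⟨hi', List.forall_mem_cons.2 ⟨hi, hr.1⟩⟩)
      (by rw [wordProd_cons, wordProd_cons, hr.2.1, sT_mul_sT_mul, sT_mul_sT_mul])
      (by simp only [List.length_cons, hr.2.2]; omega)
  have h₂ : IsReducedWord n (i :: (i + 1) :: r) (sT n (i + 1) * w) := by
    refine isReducedWord_of_length_le
      (List.forall_mem_cons.2 ⟨hi, List.forall_mem_cons.2 ⟨hi', hr.1⟩⟩) ?_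
      (by simp only [List.length_cons, hr.2.2]; omega)
    rw [wordProd_cons, wordProd_cons, hr.2.1]
    simp only [← mul_assoc]
    rw [sT_braid (by omega)]
    simp only [mul_assoc, sT_mul_sT_mul]
  calc (i :: t).foldr D a = D i (((i + 1) :: i :: r).foldr D a) :=
        congrArg (D i) (IH _ (by omega) _ _ hl.tail h₁)
    _ = D (i + 1) ((i :: (i + 1) :: r).foldr D a) := hD.braid i (by omega) _
    _ = ((i + 1) :: t').foldr D a := congrArg (D (i + 1)) (IH _ (by omega) _ _ h₂ hl'.tail)

lemma foldr_cons_eq_of_lt (hD : NilCoxeterRelations n D) (a : α)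
    (IH : ∀ v : Equiv.Perm (Fin n), invLen v < invLen w → ReducedWordsAgree n D a v)
    (hl : IsReducedWord n (i :: t) w) (hl' : IsReducedWord n (j :: t') w) (hij : i < j) :
    (i :: t).foldr D a = (j :: t').foldr D a := by
  obtain hij | rfl : i + 1 < j ∨ j = i + 1 := by omega
  · exact hD.foldr_cons_eq_of_far a IH hl hl' hij
  · exact hD.foldr_cons_eq_of_braid a IH hl hl'

theorem foldr_eq_of_isReducedWord (hD : NilCoxeterRelations n D) (a : α) {l l' : List ℕ}
    (hl : IsReducedWord n l w) (hl' : IsReducedWord n l' w) : l.foldr D a = l'.foldr D a := by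
  induction h : invLen w using Nat.strong_induction_on generalizing w l l' with
  | _ k ih =>
  subst h
  have IH : ∀ v : Equiv.Perm (Fin n), invLen v < invLen w → ReducedWordsAgree n D a v :=
    fun v hv _ _ h₁ h₂ => ih _ hv h₁ h₂ rfl
  have hlen : l.length = l'.length := hl.2.2.trans hl'.2.2.symm
  match l, l', hl, hl', hlen with
  | [], [], _, _, _ => rfl
  | i :: t, j :: t', hl, hl', _ =>
    rcases lt_trichotomy i j with hij | rfl | hij
    · exact hD.foldr_cons_eq_of_lt a IH hl hl' hij
    · exact congrArg (D i) (IH _ (by have := hl.invLen_sT_mul_head; omega) _ _ hl.tail hl'.tail)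
    · exact (hD.foldr_cons_eq_of_lt a IH hl' hl hij).symm

theorem foldr_eq_zero_of_invLen_lt (hD : NilCoxeterRelations n D) (a : α) {l : List ℕ}
    (hl : ∀ i ∈ l, i + 1 < n) (hlt : invLen (wordProd n l) < l.length) : l.foldr D a = 0 := by
  induction l with
  | nil => simp at hlt
  | cons i t ih =>
    have hi := hl i List.mem_cons_self
    have ht : ∀ j ∈ t, j + 1 < n := fun j hj => hl j (List.mem_cons_of_mem i hj)
    by_cases hred : invLen (wordProd n t) < t.length
    · exact (congrArg (D i) (ih ht hred)).trans (hD.map_zero i hi)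
    have htv : IsReducedWord n t (wordProd n t) :=
      isReducedWord_of_length_le ht rfl (not_lt.1 hred)
    rw [wordProd_cons, List.length_cons] at hlt
    have hd : invLen (sT n i * wordProd n t) < invLen (wordProd n t) := by
      rcases invLen_sT_mul_eq_or hi (w := wordProd n t) with h | h <;> omega
    obtain ⟨r, hr⟩ := exists_isReducedWord (sT n i * wordProd n t)
    have hir : IsReducedWord n (i :: r) (wordProd n t) :=
      isReducedWord_of_length_le (List.forall_mem_cons.2 ⟨hi, hr.1⟩)
        (by rw [wordProd_cons, hr.2.1, sT_mul_sT_mul])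
        (by rw [List.length_cons, hr.2.2, invLen_sT_mul_add_one hi hd])
    calc (i :: t).foldr D a = D i ((i :: r).foldr D a) :=
          congrArg (D i) (hD.foldr_eq_of_isReducedWord a htv hir)
      _ = 0 := hD.sq_eq_zero i hi _

end NilCoxeterRelations

section DividedDifference

variable {R F : Type*} [CommRing R] [FunLike F R R] [RingHomClass F R R] {σ τ : F} {a b c : R}
  {Dσ Dτ : R → R}

lemma map_eq_self_of_mul_eq_sub [IsDomain R] (hσ : ∀ x, σ (σ x) = x) (ha : σ a = -a)
    (ha₀ : a ≠ 0) {f g : R} (hg : a * g = f - σ f) : σ g = g := by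
  have h := congrArg σ hg
  rw [map_mul, map_sub, ha, hσ] at h
  exact mul_left_cancel₀ ha₀ (by linear_combination -h - hg)

lemma mul_mul_divDiff_comm (hσb : σ b = b) (hDσ : ∀ f, a * Dσ f = f - σ f)
    (hDτ : ∀ f, b * Dτ f = f - τ f) (f : R) :
    a * b * Dσ (Dτ f) = f - σ f - τ f + σ (τ f) := by
  have h := congrArg σ (hDτ f)
  rw [map_mul, hσb, map_sub] at h
  linear_combination b * hDσ (Dτ f) + hDτ f - h

lemma mul_mul_mul_divDiff_braid (hσb : σ b = c) (hτa : τ a = c) (hσc : σ c = b)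
    (habc : a + b = c) (hDσ : ∀ f, a * Dσ f = f - σ f) (hDτ : ∀ f, b * Dτ f = f - τ f)
    (hσDσ : ∀ f, σ (Dσ f) = Dσ f) (f : R) :
    a * b * c * Dσ (Dτ (Dσ f)) = f - σ f - τ f + σ (τ f) + τ (σ f) - σ (τ (σ f)) := by
  have e₁ := congrArg σ (hDτ (Dσ f))
  rw [map_mul, hσb, map_sub, hσDσ] at e₁
  have e₂ := congrArg τ (hDσ f)
  rw [map_mul, hτa, map_sub] at e₂
  have e₃ := congrArg σ e₂
  rw [map_mul, hσc, map_sub] at e₃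
  linear_combination b * c * hDσ (Dτ (Dσ f)) + c * hDτ (Dσ f) - b * e₁ - Dσ f * habc
    + hDσ f - e₂ + e₃

end DividedDifference

lemma MvPolynomial.X_sub_X_dvd_sub_rename_swap {σ R : Type*} [CommRing R] [DecidableEq σ]
    (x y : σ) (f : MvPolynomial σ R) : X x - X y ∣ f - rename (Equiv.swap x y) f := by
  induction f using MvPolynomial.induction_on with
  | C r => simp
  | add p q hp hq =>
    rw [map_add, add_sub_add_comm]
    exact dvd_add hp hq
  | mul_X p z hp =>
    have key : p * X z - rename (Equiv.swap x y) (p * X z) = (p - rename (Equiv.swap x y) p) * X z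
        + rename (Equiv.swap x y) p * (X z - X (Equiv.swap x y z)) := by
      rw [map_mul, rename_X]; ring
    rw [key]
    refine dvd_add (dvd_mul_of_dvd_left hp _) (dvd_mul_of_dvd_right ?_ _)
    rcases eq_or_ne z x with rfl | hzx
    · rw [Equiv.swap_apply_left]
    rcases eq_or_ne z y with rfl | hzy
    · rw [Equiv.swap_apply_right]
      exact dvd_sub_comm.1 dvd_rfl
    · rw [Equiv.swap_apply_of_ne_of_ne hzx hzy, sub_self]
      exact dvd_zero _

section DividedDifferenceOperator

variable {n i j : ℕ}

lemma xv_of_lt (h : j < n) : xv n j = X ⟨j, h⟩ := dif_pos h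

lemma rename_sT_xv_left (hi : i + 1 < n) : rename (sT n i) (xv n i) = xv n (i + 1) := by
  rw [xv_of_lt (j := i) (by omega), xv_of_lt hi, rename_X, sT_apply_left hi]

lemma rename_sT_xv_right (hi : i + 1 < n) : rename (sT n i) (xv n (i + 1)) = xv n i := by
  rw [xv_of_lt (j := i) (by omega), xv_of_lt hi, rename_X, sT_apply_right hi]

lemma rename_sT_xv_of_ne (h₁ : j ≠ i) (h₂ : j ≠ i + 1) : rename (sT n i) (xv n j) = xv n j := by
  by_cases hj : j < n
  · rw [xv_of_lt hj, rename_X, sT_apply_of_ne hj h₁ h₂]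
  · rw [xv, dif_neg hj, map_zero]

lemma xv_sub_xv_ne_zero {k : ℕ} (hj : j < n) (hk : k < n) (h : j ≠ k) : xv n j - xv n k ≠ 0 := by
  rw [xv_of_lt hj, xv_of_lt hk, sub_ne_zero, Ne, X_inj, Fin.mk.injEq]
  exact h

lemma rename_sT_rename_sT (f : MvPolynomial (Fin n) ℤ) :
    rename (sT n i) (rename (sT n i) f) = f := by
  rw [rename_rename, ← Equiv.Perm.coe_mul, sT_mul_self, Equiv.Perm.coe_one, rename_id,
    AlgHom.id_apply]

lemma rename_sT_comm (hij : i + 1 < j) (f : MvPolynomial (Fin n) ℤ) :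
    rename (sT n i) (rename (sT n j) f) = rename (sT n j) (rename (sT n i) f) := by
  rw [rename_rename, rename_rename, ← Equiv.Perm.coe_mul, ← Equiv.Perm.coe_mul, sT_mul_comm hij]

lemma rename_sT_braid (h : i + 2 < n) (f : MvPolynomial (Fin n) ℤ) :
    rename (sT n i) (rename (sT n (i + 1)) (rename (sT n i) f)) =
      rename (sT n (i + 1)) (rename (sT n i) (rename (sT n (i + 1)) f)) := by
  simp only [rename_rename, ← Equiv.Perm.coe_mul, ← mul_assoc, sT_braid h]

lemma dd_spec (hi : i + 1 < n) (f : MvPolynomial (Fin n) ℤ) :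
    (xv n i - xv n (i + 1)) * dd n i f = f - rename (sT n i) f := by
  have hdvd : ∃ g, f - rename (sT n i) f = (X ⟨i, by omega⟩ - X ⟨i + 1, hi⟩) * g := by
    rw [sT_of_lt hi]
    exact X_sub_X_dvd_sub_rename_swap _ _ f
  rw [dd, dif_pos hi, dif_pos hdvd, xv_of_lt, xv_of_lt hi]
  exact hdvd.choose_spec.symm

lemma dd_eq_zero_of_rename_eq (hi : i + 1 < n) {f : MvPolynomial (Fin n) ℤ}
    (hf : rename (sT n i) f = f) : dd n i f = 0 := by
  have h := dd_spec hi f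
  rw [hf, sub_self, mul_eq_zero] at h
  exact h.resolve_left (xv_sub_xv_ne_zero (by omega) hi (by omega))

lemma rename_dd (hi : i + 1 < n) (f : MvPolynomial (Fin n) ℤ) :
    rename (sT n i) (dd n i f) = dd n i f :=
  map_eq_self_of_mul_eq_sub rename_sT_rename_sT
    (by rw [map_sub, rename_sT_xv_left hi, rename_sT_xv_right hi, neg_sub])
    (xv_sub_xv_ne_zero (by omega) hi (by omega)) (dd_spec hi f)

lemma dd_dd (hi : i + 1 < n) (f : MvPolynomial (Fin n) ℤ) : dd n i (dd n i f) = 0 :=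
  dd_eq_zero_of_rename_eq hi (rename_dd hi f)

lemma dd_comm (hij : i + 1 < j) (hj : j + 1 < n) (f : MvPolynomial (Fin n) ℤ) :
    dd n i (dd n j f) = dd n j (dd n i f) := by
  have hi : i + 1 < n := by omega
  refine mul_left_cancel₀ (mul_ne_zero (xv_sub_xv_ne_zero (n := n) (j := i) (k := i + 1)
    (by omega) hi (by omega)) (xv_sub_xv_ne_zero (j := j) (by omega) hj (by omega))) ?_
  rw [mul_mul_divDiff_comm (by rw [map_sub, rename_sT_xv_of_ne (by omega) (by omega),
      rename_sT_xv_of_ne (by omega) (by omega)]) (dd_spec hi) (dd_spec hj),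
    mul_comm (xv n i - _), mul_mul_divDiff_comm (by rw [map_sub,
      rename_sT_xv_of_ne (by omega) (by omega), rename_sT_xv_of_ne (by omega) (by omega)])
      (dd_spec hj) (dd_spec hi), rename_sT_comm hij]
  ring

lemma dd_braid (h : i + 2 < n) (f : MvPolynomial (Fin n) ℤ) :
    dd n i (dd n (i + 1) (dd n i f)) = dd n (i + 1) (dd n i (dd n (i + 1) f)) := by
  have hi : i + 1 < n := by omega
  have hi' : i + 1 + 1 < n := by omega
  have hσb : rename (sT n i) (xv n (i + 1) - xv n (i + 1 + 1)) = xv n i - xv n (i + 1 + 1) := by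
    rw [map_sub, rename_sT_xv_right hi, rename_sT_xv_of_ne (by omega) (by omega)]
  have hτa : rename (sT n (i + 1)) (xv n i - xv n (i + 1)) = xv n i - xv n (i + 1 + 1) := by
    rw [map_sub, rename_sT_xv_left hi', rename_sT_xv_of_ne (by omega) (by omega)]
  have hσc : rename (sT n i) (xv n i - xv n (i + 1 + 1)) = xv n (i + 1) - xv n (i + 1 + 1) := by
    rw [map_sub, rename_sT_xv_left hi, rename_sT_xv_of_ne (by omega) (by omega)]
  have hτc : rename (sT n (i + 1)) (xv n i - xv n (i + 1 + 1)) = xv n i - xv n (i + 1) := by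
    rw [map_sub, rename_sT_xv_right hi', rename_sT_xv_of_ne (by omega) (by omega)]
  have hne : (xv n i - xv n (i + 1)) * (xv n (i + 1) - xv n (i + 1 + 1)) *
      (xv n i - xv n (i + 1 + 1)) ≠ 0 :=
    mul_ne_zero (mul_ne_zero (xv_sub_xv_ne_zero (by omega) hi (by omega))
      (xv_sub_xv_ne_zero hi hi' (by omega))) (xv_sub_xv_ne_zero (by omega) hi' (by omega))
  refine mul_left_cancel₀ hne ?_
  rw [mul_mul_mul_divDiff_braid hσb hτa hσc (by ring) (dd_spec hi) (dd_spec hi') (rename_dd hi),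
    mul_comm (xv n i - _), mul_mul_mul_divDiff_braid hτa hσb hτc (by ring) (dd_spec hi')
      (dd_spec hi) (rename_dd hi'), rename_sT_braid h]
  ring

theorem nilCoxeterRelations_dd : NilCoxeterRelations n (dd n) :=
  ⟨fun _ hi => dd_eq_zero_of_rename_eq hi (map_zero _), fun _ hi => dd_dd hi,
    fun _ _ hij hj => dd_comm hij hj, fun _ h => dd_braid h⟩

lemma ddList_eq_foldr (l : List ℕ) (f : MvPolynomial (Fin n) ℤ) :
    ddList n l f = l.foldr (dd n) f := by
  induction l with
  | nil => rfl
  | cons i l ih => rw [ddList, ih, List.foldr_cons]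

end DividedDifferenceOperator

/-- if a word `(i_1,…,i_m)` in `{1,…,n-1}` is not reduced, i.e.
`ℓ(s_{i_1}⋯s_{i_m}) < m`, then `∂_{i_1} ∘ ⋯ ∘ ∂_{i_m} = 0`.  In particular
`∂_i ∘ ∂_i = 0` for every `i`. -/
theorem stmt2 (n : ℕ) :
    (∀ l : List ℕ, (∀ i ∈ l, i + 1 < n) → invLen (wordProd n l) < l.length →
      ∀ f : MvPolynomial (Fin n) ℤ, ddList n l f = 0) ∧
    (∀ i : ℕ, i + 1 < n → ∀ f : MvPolynomial (Fin n) ℤ, dd n i (dd n i f) = 0) :=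
  ⟨fun l hl hlt f => (ddList_eq_foldr l f).trans
      (nilCoxeterRelations_dd.foldr_eq_zero_of_invLen_lt f hl hlt),
    fun _ hi f => dd_dd hi f⟩
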